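/- arXiv:0907.2859 — 2 statements merged into one kernel-verified Lean document; each statement's English description precedes it below -/
import Mathlib

section
/- Define f(α) = √( α(1-α) / ((αβ+(1-α)(1-γ))(α(1-β)+(1-α)γ)) ) for α ∈ (0,1), with β, γ ∈ (0,1) and β+γ ≠ 1. Then f is strictly concave on (0,1). -/
/-- Strict convexity inequality for `u / (affine)`: evaluated at a strict convex
combination of two distinct positive points. -/
lemma aux_inv (u X Y a b : ℝ) (hu : 0 < u) (hX : 0 < X) (hY : 0 < Y) (hXY : X ≠ Y)
    (ha : 0 < a) (hb : 0 < b) (hab : a + b = 1) :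
    u / (a * X + b * Y) < a * (u / X) + b * (u / Y) := by
  have hS : 0 < a * X + b * Y := by positivity
  have e : a * (u / X) + b * (u / Y) = (a * u * Y + b * u * X) / (X * Y) := by
    field_simp
  rw [div_lt_iff₀ hS, e, div_mul_eq_mul_div, lt_div_iff₀ (mul_pos hX hY)]
  have h2 : 0 < (X - Y) ^ 2 := sq_pos_of_ne_zero (sub_ne_zero.mpr hXY)
  have expand : (a * u * Y + b * u * X) * (a * X + b * Y) - u * (X * Y)
      = a * b * u * (X - Y) ^ 2 := by
    linear_combination (u * X * Y * (a + b + 1)) * hab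
  nlinarith [mul_pos (mul_pos ha hb) (mul_pos hu h2)]

theorem f_strictConcave (β γ : ℝ) (hβ : β ∈ Set.Ioo (0:ℝ) 1) (hγ : γ ∈ Set.Ioo (0:ℝ) 1)
    (hβγ : β + γ ≠ 1) :
    StrictConcaveOn ℝ (Set.Ioo (0:ℝ) 1)
      (fun α => Real.sqrt (α * (1 - α) /
        ((α * β + (1 - α) * (1 - γ)) * (α * (1 - β) + (1 - α) * γ)))) := by
  obtain ⟨hβ0, hβ1⟩ := hβ
  obtain ⟨hγ0, hγ1⟩ := hγ
  have hc : β + γ - 1 ≠ 0 := sub_ne_zero.mpr hβγ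
  have hc2 : (0:ℝ) < (β + γ - 1) ^ 2 := sq_pos_of_ne_zero hc
  -- positivity of the affine factors on (0,1)
  have hP : ∀ z ∈ Set.Ioo (0:ℝ) 1, 0 < z * β + (1 - z) * (1 - γ) := by
    rintro z ⟨hz0, hz1⟩; nlinarith
  have hQ : ∀ z ∈ Set.Ioo (0:ℝ) 1, 0 < z * (1 - β) + (1 - z) * γ := by
    rintro z ⟨hz0, hz1⟩; nlinarith
  -- the key algebraic identity
  have hid : ∀ z ∈ Set.Ioo (0:ℝ) 1,
      z * (1 - z) / ((z * β + (1 - z) * (1 - γ)) * (z * (1 - β) + (1 - z) * γ)) =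
      (1 - β * (1 - γ) / (z * β + (1 - z) * (1 - γ))
         - γ * (1 - β) / (z * (1 - β) + (1 - z) * γ)) / (β + γ - 1) ^ 2 := by
    intro z hz
    have h1 := (hP z hz).ne'
    have h2 := (hQ z hz).ne'
    field_simp
    ring
  constructor
  · exact convex_Ioo 0 1
  intro x hx y hy hxy a b ha hb hab
  obtain ⟨hx0, hx1⟩ := hx
  obtain ⟨hy0, hy1⟩ := hy
  have hs : a * x + b * y ∈ Set.Ioo (0:ℝ) 1 := by
    constructor <;> nlinarith
  set s : ℝ := a * x + b * y with hs_def
  have hPx := hP x ⟨hx0, hx1⟩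
  have hPy := hP y ⟨hy0, hy1⟩
  have hQx := hQ x ⟨hx0, hx1⟩
  have hQy := hQ y ⟨hy0, hy1⟩
  have hPs_eq : s * β + (1 - s) * (1 - γ)
      = a * (x * β + (1 - x) * (1 - γ)) + b * (y * β + (1 - y) * (1 - γ)) := by
    rw [hs_def]; linear_combination (γ - 1) * hab
  have hQs_eq : s * (1 - β) + (1 - s) * γ
      = a * (x * (1 - β) + (1 - x) * γ) + b * (y * (1 - β) + (1 - y) * γ) := by
    rw [hs_def]; linear_combination (-γ) * hab
  have hPne : x * β + (1 - x) * (1 - γ) ≠ y * β + (1 - y) * (1 - γ) := by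
    intro h
    have : (x - y) * (β + γ - 1) = 0 := by linear_combination h
    rcases mul_eq_zero.mp this with h' | h'
    · exact hxy (by linarith [sub_eq_zero.mp h'])
    · exact hc h'
  have hQne : x * (1 - β) + (1 - x) * γ ≠ y * (1 - β) + (1 - y) * γ := by
    intro h
    have : (x - y) * (-(β + γ - 1)) = 0 := by linear_combination h
    rcases mul_eq_zero.mp this with h' | h'
    · exact hxy (by linarith [sub_eq_zero.mp h'])
    · exact hc (by linarith [h'])
  have hu : (0:ℝ) < β * (1 - γ) := by nlinarith
  have hv : (0:ℝ) < γ * (1 - β) := by nlinarith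
  -- strict convexity of the two reciprocal terms
  have h1 : β * (1 - γ) / (s * β + (1 - s) * (1 - γ))
      < a * (β * (1 - γ) / (x * β + (1 - x) * (1 - γ)))
        + b * (β * (1 - γ) / (y * β + (1 - y) * (1 - γ))) := by
    rw [hPs_eq]
    exact aux_inv _ _ _ _ _ hu hPx hPy hPne ha hb hab
  have h2 : γ * (1 - β) / (s * (1 - β) + (1 - s) * γ)
      < a * (γ * (1 - β) / (x * (1 - β) + (1 - x) * γ))
        + b * (γ * (1 - β) / (y * (1 - β) + (1 - y) * γ)) := by
    rw [hQs_eq]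
    exact aux_inv _ _ _ _ _ hv hQx hQy hQne ha hb hab
  -- strict concavity at the level of f²
  have key : a * (x * (1 - x) / ((x * β + (1 - x) * (1 - γ)) * (x * (1 - β) + (1 - x) * γ)))
      + b * (y * (1 - y) / ((y * β + (1 - y) * (1 - γ)) * (y * (1 - β) + (1 - y) * γ)))
      < s * (1 - s) / ((s * β + (1 - s) * (1 - γ)) * (s * (1 - β) + (1 - s) * γ)) := by
    rw [hid x ⟨hx0, hx1⟩, hid y ⟨hy0, hy1⟩, hid s hs]
    have e : a * ((1 - β * (1 - γ) / (x * β + (1 - x) * (1 - γ))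
          - γ * (1 - β) / (x * (1 - β) + (1 - x) * γ)) / (β + γ - 1) ^ 2)
        + b * ((1 - β * (1 - γ) / (y * β + (1 - y) * (1 - γ))
          - γ * (1 - β) / (y * (1 - β) + (1 - y) * γ)) / (β + γ - 1) ^ 2)
        = (a * (1 - β * (1 - γ) / (x * β + (1 - x) * (1 - γ))
          - γ * (1 - β) / (x * (1 - β) + (1 - x) * γ))
          + b * (1 - β * (1 - γ) / (y * β + (1 - y) * (1 - γ))
          - γ * (1 - β) / (y * (1 - β) + (1 - y) * γ))) / (β + γ - 1) ^ 2 := by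
      ring
    rw [e, div_lt_div_iff₀ hc2 hc2]
    have hlt : a * (1 - β * (1 - γ) / (x * β + (1 - x) * (1 - γ))
          - γ * (1 - β) / (x * (1 - β) + (1 - x) * γ))
          + b * (1 - β * (1 - γ) / (y * β + (1 - y) * (1 - γ))
          - γ * (1 - β) / (y * (1 - β) + (1 - y) * γ))
        < 1 - β * (1 - γ) / (s * β + (1 - s) * (1 - γ))
          - γ * (1 - β) / (s * (1 - β) + (1 - s) * γ) := by
      linarith [h1, h2]
    exact mul_lt_mul_of_pos_right hlt hc2
  -- nonnegativity of the inside
  have hix : 0 < x * (1 - x) / ((x * β + (1 - x) * (1 - γ)) * (x * (1 - β) + (1 - x) * γ)) :=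
    div_pos (by nlinarith) (mul_pos hPx hQx)
  have hiy : 0 < y * (1 - y) / ((y * β + (1 - y) * (1 - γ)) * (y * (1 - β) + (1 - y) * γ)) :=
    div_pos (by nlinarith) (mul_pos hPy hQy)
  -- conclude via concavity and strict monotonicity of sqrt
  have hsqrt := Real.strictConcaveOn_sqrt.concaveOn.2
    (Set.mem_Ici.mpr hix.le) (Set.mem_Ici.mpr hiy.le) ha.le hb.le hab
  simp only [smul_eq_mul] at hsqrt ⊢
  calc a * Real.sqrt (x * (1 - x) /
          ((x * β + (1 - x) * (1 - γ)) * (x * (1 - β) + (1 - x) * γ)))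
        + b * Real.sqrt (y * (1 - y) /
          ((y * β + (1 - y) * (1 - γ)) * (y * (1 - β) + (1 - y) * γ)))
      ≤ Real.sqrt (a * (x * (1 - x) /
          ((x * β + (1 - x) * (1 - γ)) * (x * (1 - β) + (1 - x) * γ)))
        + b * (y * (1 - y) /
          ((y * β + (1 - y) * (1 - γ)) * (y * (1 - β) + (1 - y) * γ)))) := hsqrt
    _ < Real.sqrt (s * (1 - s) /
          ((s * β + (1 - s) * (1 - γ)) * (s * (1 - β) + (1 - s) * γ))) :=
        Real.sqrt_lt_sqrt (by positivity) key
end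

section
/- Define ρ(α) = (β+γ-1)·f(α), where f(α) = √( α(1-α) / ((αβ+(1-α)(1-γ))(α(1-β)+(1-α)γ)) ). Then ρ is strictly concave on (0,1) if 1 < β+γ < 2, and strictly convex on (0,1) if 0 < β+γ < 1. -/
/-!
With `p = αβ + (1-α)(1-γ)` and `q = α(1-β) + (1-α)γ` we have `p + q = 1` and `p` affine in `α`,
and partial fractions give `pq / (α(1-α)) = β(1-β)/(1-α) + γ(1-γ)/α + (β+γ-1)²`. So
`ρ = (β+γ-1) φ^{-1/2}` for this `φ`, and `φ^{-1/2}` is strictly concave because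
`2φφ'' - 3φ'²` is a sum of positive terms. The sign of `β + γ - 1` then decides.
-/

open Set Filter Topology

section ConstMul

variable {𝕜 E : Type*} [Field 𝕜] [LinearOrder 𝕜] [IsStrictOrderedRing 𝕜] [AddCommMonoid E]
  [Module 𝕜 E] {s : Set E} {f : E → 𝕜} {c : 𝕜}

theorem StrictConcaveOn.const_mul (hf : StrictConcaveOn 𝕜 s f) (hc : 0 < c) :
    StrictConcaveOn 𝕜 s (fun x => c * f x) := by
  refine ⟨hf.1, fun x hx y hy hxy a b ha hb hab => ?_⟩
  have h := mul_lt_mul_of_pos_left (hf.2 hx hy hxy ha hb hab) hc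
  simp only [smul_eq_mul] at h ⊢
  linarith

theorem StrictConcaveOn.const_mul_of_neg (hf : StrictConcaveOn 𝕜 s f) (hc : c < 0) :
    StrictConvexOn 𝕜 s (fun x => c * f x) := by
  have h := (hf.const_mul (neg_pos.2 hc)).neg
  simp only [Pi.neg_def, neg_mul, neg_neg] at h
  exact h

end ConstMul

theorem strictConcaveOn_of_hasDerivAt2_neg {D : Set ℝ} (hD : Convex ℝ D) (hDo : IsOpen D)
    {f f' f'' : ℝ → ℝ} (hf : ∀ x ∈ D, HasDerivAt f (f' x) x)
    (hf' : ∀ x ∈ D, HasDerivAt f' (f'' x) x) (hf'' : ∀ x ∈ D, f'' x < 0) :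
    StrictConcaveOn ℝ D f := by
  refine strictConcaveOn_of_deriv2_neg hD (fun x hx => (hf x hx).continuousAt.continuousWithinAt)
    fun x hx => ?_
  rw [hDo.interior_eq] at hx
  have hderiv : deriv f =ᶠ[𝓝 x] f' :=
    eventually_of_mem (hDo.mem_nhds hx) fun y hy => (hf y hy).deriv
  rw [Function.iterate_succ_apply, Function.iterate_one, hderiv.deriv_eq, (hf' x hx).deriv]
  exact hf'' x hx

theorem HasDerivAt.inv_sqrt {φ : ℝ → ℝ} {φ' x : ℝ} (hφ : HasDerivAt φ φ' x) (hpos : 0 < φ x) :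
    HasDerivAt (fun y => (√(φ y))⁻¹) (-φ' * (√(φ x))⁻¹ ^ 3 / 2) x := by
  have hs := Real.sqrt_pos.2 hpos
  refine ((hφ.sqrt hpos.ne').inv hs.ne').congr_deriv ?_
  field_simp

theorem strictConcaveOn_inv_sqrt {D : Set ℝ} (hD : Convex ℝ D) (hDo : IsOpen D)
    {φ φ' φ'' : ℝ → ℝ} (hφ : ∀ x ∈ D, HasDerivAt φ (φ' x) x)
    (hφ' : ∀ x ∈ D, HasDerivAt φ' (φ'' x) x) (hpos : ∀ x ∈ D, 0 < φ x)
    (hkey : ∀ x ∈ D, 3 * φ' x ^ 2 < 2 * φ x * φ'' x) :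
    StrictConcaveOn ℝ D (fun x => (√(φ x))⁻¹) := by
  set g := fun x => (√(φ x))⁻¹
  have hg : ∀ x ∈ D, HasDerivAt g (-φ' x * g x ^ 3 / 2) x := fun x hx =>
    (hφ x hx).inv_sqrt (hpos x hx)
  refine strictConcaveOn_of_hasDerivAt2_neg hD hDo hg
    (f'' := fun x => g x ^ 5 * (3 * φ' x ^ 2 - 2 * φ x * φ'' x) / 4) (fun x hx => ?_) fun x hx => ?_
  · have hgφ : g x ^ 2 * φ x = 1 := by
      simp only [g, inv_pow, Real.sq_sqrt (hpos x hx).le, inv_mul_cancel₀ (hpos x hx).ne']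
    refine (((hφ' x hx).neg.mul ((hg x hx).pow 3)).div_const 2).congr_deriv ?_
    simp only [Pi.neg_apply, Pi.pow_apply, Nat.cast_ofNat]
    linear_combination (φ'' x * g x ^ 3 / 2) * hgφ
  · have hg0 : 0 < g x := inv_pos.2 (Real.sqrt_pos.2 (hpos x hx))
    exact div_neg_of_neg_of_pos (mul_neg_of_pos_of_neg (by positivity) (sub_neg.2 (hkey x hx)))
      four_pos

theorem three_mul_sq_lt_of_pos {A B c u v : ℝ} (hA : 0 < A) (hB : 0 < B) (hc : 0 ≤ c)
    (hu : 0 < u) (hv : 0 < v) :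
    3 * (A * u ^ 2 - B * v ^ 2) ^ 2 < 2 * (A * u + B * v + c) * (2 * A * u ^ 3 + 2 * B * v ^ 3) := by
  have hexpand : 2 * (A * u + B * v + c) * (2 * A * u ^ 3 + 2 * B * v ^ 3)
      - 3 * (A * u ^ 2 - B * v ^ 2) ^ 2 = (A * u ^ 2) ^ 2 + (B * v ^ 2) ^ 2
        + 4 * A * B * u * v * (u ^ 2 + v ^ 2) + 6 * A * B * u ^ 2 * v ^ 2
        + 4 * c * (A * u ^ 3 + B * v ^ 3) := by ring
  have : 0 < 2 * (A * u + B * v + c) * (2 * A * u ^ 3 + 2 * B * v ^ 3)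
      - 3 * (A * u ^ 2 - B * v ^ 2) ^ 2 := by rw [hexpand]; positivity
  linarith

theorem strictConcaveOn_inv_sqrt_div_one_sub_add_div {A B c : ℝ} (hA : 0 < A) (hB : 0 < B)
    (hc : 0 ≤ c) : StrictConcaveOn ℝ (Ioo 0 1) (fun x => (√(A / (1 - x) + B / x + c))⁻¹) := by
  refine strictConcaveOn_inv_sqrt (convex_Ioo 0 1) isOpen_Ioo
    (φ' := fun x => A / (1 - x) ^ 2 - B / x ^ 2)
    (φ'' := fun x => 2 * A / (1 - x) ^ 3 + 2 * B / x ^ 3) ?_ ?_ ?_ ?_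
  all_goals intro x ⟨hx0, hx1⟩
  all_goals have hx1' : 0 < 1 - x := sub_pos.2 hx1
  · have h := (((hasDerivAt_const x A).div ((hasDerivAt_const x 1).sub (hasDerivAt_id x))
      hx1'.ne').add ((hasDerivAt_const x B).div (hasDerivAt_id x) hx0.ne')).add_const c
    refine h.congr_deriv ?_
    simp only [Pi.sub_apply, id_eq]
    field_simp
    ring
  · have h := ((hasDerivAt_const x A).div (((hasDerivAt_const x 1).sub (hasDerivAt_id x)).pow 2)
      (pow_ne_zero 2 hx1'.ne')).sub
      ((hasDerivAt_const x B).div ((hasDerivAt_id x).pow 2) (pow_ne_zero 2 hx0.ne'))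
    refine h.congr_deriv ?_
    simp only [Pi.sub_apply, Pi.pow_apply, id_eq, Nat.cast_ofNat]
    field_simp
    ring
  · positivity
  · have key := three_mul_sq_lt_of_pos hA hB hc (inv_pos.2 hx1') (inv_pos.2 hx0)
    convert key using 1 <;> field_simp

theorem variance_ratio_eq_inv (β γ : ℝ) {α : ℝ} (h0 : α ≠ 0) (h1 : α ≠ 1) :
    α * (1 - α) / ((α * β + (1 - α) * (1 - γ)) * (α * (1 - β) + (1 - α) * γ))
      = (β * (1 - β) / (1 - α) + γ * (1 - γ) / α + (β + γ - 1) ^ 2)⁻¹ := by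
  have h1' : 1 - α ≠ 0 := sub_ne_zero.2 h1.symm
  rw [← inv_div]
  congr 1
  field_simp
  ring

theorem rho_concave_or_convex (β γ : ℝ) (hβ : β ∈ Set.Ioo (0:ℝ) 1) (hγ : γ ∈ Set.Ioo (0:ℝ) 1) :
    ((1 < β + γ ∧ β + γ < 2) →
      StrictConcaveOn ℝ (Set.Ioo (0:ℝ) 1)
        (fun α => (β + γ - 1) * Real.sqrt (α * (1 - α) /
          ((α * β + (1 - α) * (1 - γ)) * (α * (1 - β) + (1 - α) * γ)))))
    ∧ ((0 < β + γ ∧ β + γ < 1) →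
      StrictConvexOn ℝ (Set.Ioo (0:ℝ) 1)
        (fun α => (β + γ - 1) * Real.sqrt (α * (1 - α) /
          ((α * β + (1 - α) * (1 - γ)) * (α * (1 - β) + (1 - α) * γ))))) := by
  obtain ⟨hβ0, hβ1⟩ := hβ
  obtain ⟨hγ0, hγ1⟩ := hγ
  have hf : StrictConcaveOn ℝ (Ioo 0 1) fun α => √(α * (1 - α) /
      ((α * β + (1 - α) * (1 - γ)) * (α * (1 - β) + (1 - α) * γ))) :=
    (strictConcaveOn_inv_sqrt_div_one_sub_add_div (mul_pos hβ0 (sub_pos.2 hβ1))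
      (mul_pos hγ0 (sub_pos.2 hγ1)) (sq_nonneg (β + γ - 1))).congr fun α hα => by
        rw [variance_ratio_eq_inv β γ hα.1.ne' hα.2.ne, Real.sqrt_inv]
  exact ⟨fun h => hf.const_mul (by linarith), fun h => hf.const_mul_of_neg (by linarith)⟩
end
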